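/- arXiv:2311.06967 — 2 statements merged into one kernel-verified Lean document; each statement's English description precedes it below -/
import Mathlib

section
/- Let φ_H, φ_V ∈ ℂ^M be unimodular sequences with |φ_H^T a(ψ)|² + |φ_V^T a(ψ)|² = A(ψ) for a(ψ) = (1, e^{-jψ}, …, e^{-j(M-1)ψ})^T, and let (u, v) be a Golay complementary pair of length N. Define the length-2MN sequences φ̃_H = [u ⊗ φ_H; -v ⊗ E_M φ_V^*] and φ̃_V = [u ⊗ φ_V; v ⊗ E_M φ_H^*], where ⊗ is the Kronecker product, E_M is the reversal operator, and * is entrywise conjugation. Then for all real ψ, |φ̃_H^T ã(ψ)|² + |φ̃_V^T ã(ψ)|² = 2N·A(ψ), where ã(ψ) = (1, e^{-jψ}, …, e^{-j(2MN-1)ψ})^T. -/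
open Complex BigOperators Finset

/-- Aperiodic autocorrelation of a finite complex sequence, as a function of integer lag. -/
noncomputable def acf {M : ℕ} (φ : Fin M → ℂ) (τ : ℤ) : ℂ :=
  ∑ m : Fin M, ∑ k : Fin M,
    if ((k : ℕ) : ℤ) - ((m : ℕ) : ℤ) = τ then φ m * (starRingEnd ℂ) (φ k) else 0

/-- A Golay complementary pair: unimodular sequences whose autocorrelations sum to `2M · δ[τ]`. -/
def IsGolayPair {M : ℕ} (u v : Fin M → ℂ) : Prop :=
  (∀ m, ‖u m‖ = 1) ∧ (∀ m, ‖v m‖ = 1) ∧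
    ∀ τ : ℤ, acf u τ + acf v τ = if τ = 0 then (2 * M : ℂ) else 0

/-- Steering vector: `m`-th entry `e^{-j m ψ}` (0-based). -/
noncomputable def steer (K : ℕ) (ψ : ℝ) : Fin K → ℂ :=
  fun m => Complex.exp (-Complex.I * ((m : ℕ) : ℂ) * (ψ : ℂ))

/-- Kronecker product of vectors: block `n` is `u n • φ`. -/
noncomputable def kron {N M : ℕ} (u : Fin N → ℂ) (φ : Fin M → ℂ) : Fin (N * M) → ℂ :=
  fun i => u i.divNat * φ i.modNat

lemma steer_eq (K : ℕ) (ψ : ℝ) (i : Fin K) :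
    steer K ψ i = Complex.exp (-Complex.I * ψ) ^ (i : ℕ) := by
  rw [steer, ← Complex.exp_nat_mul]
  congr 1; ring

lemma kron_sum {N M : ℕ} (u : Fin N → ℂ) (φ : Fin M → ℂ) (z : ℂ) :
    ∑ i : Fin (N * M), kron u φ i * z ^ (i : ℕ)
      = (∑ n : Fin N, u n * (z ^ M) ^ (n : ℕ)) * (∑ m : Fin M, φ m * z ^ (m : ℕ)) := by
  rw [Finset.sum_mul_sum]
  rw [← Equiv.sum_comp finProdFinEquiv (fun i => kron u φ i * z ^ (i : ℕ)),
    Fintype.sum_prod_type]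
  refine Finset.sum_congr rfl fun n _ => Finset.sum_congr rfl fun m _ => ?_
  have h1 : (finProdFinEquiv (n, m)).divNat = n := by
    have := finProdFinEquiv.symm_apply_apply (n, m)
    rw [finProdFinEquiv_symm_apply] at this
    exact congrArg Prod.fst this
  have h2 : (finProdFinEquiv (n, m)).modNat = m := by
    have := finProdFinEquiv.symm_apply_apply (n, m)
    rw [finProdFinEquiv_symm_apply] at this
    exact congrArg Prod.snd this
  have h3 : ((finProdFinEquiv (n, m) : Fin (N * M)) : ℕ) = m + M * n := rfl
  rw [kron, h1, h2, h3, pow_add, pow_mul]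
  ring

lemma rev_sum {M : ℕ} (φ : Fin M → ℂ) (z : ℂ) (hz : z * (starRingEnd ℂ) z = 1) :
    ∑ m : Fin M, (starRingEnd ℂ) (φ m.rev) * z ^ (m : ℕ)
      = z ^ (M - 1) * (starRingEnd ℂ) (∑ m : Fin M, φ m * z ^ (m : ℕ)) := by
  rw [map_sum]
  rw [← Equiv.sum_comp (Fin.revPerm) (fun m : Fin M => (starRingEnd ℂ) (φ m.rev) * z ^ (m : ℕ)),
    Finset.mul_sum]
  refine Finset.sum_congr rfl fun m _ => ?_
  simp only [Fin.revPerm_apply, Fin.rev_rev, Fin.val_rev, map_mul, map_pow]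
  have hmlt : (m : ℕ) < M := m.isLt
  have key : z ^ (M - 1 - (m : ℕ)) = z ^ (M - 1) * ((starRingEnd ℂ) z) ^ (m : ℕ) := by
    have h : (M - 1 - (m : ℕ)) + (m : ℕ) = M - 1 := by omega
    calc z ^ (M - 1 - (m : ℕ))
        = z ^ (M - 1 - (m : ℕ)) * (z * (starRingEnd ℂ) z) ^ (m : ℕ) := by rw [hz, one_pow, mul_one]
      _ = z ^ (M - 1) * ((starRingEnd ℂ) z) ^ (m : ℕ) := by
          rw [mul_pow, ← mul_assoc, ← pow_add, h]
  have heq : M - 1 - (m : ℕ) = M - ((m : ℕ) + 1) := by omega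
  rw [← heq, key]
  ring

lemma golay_spec {N : ℕ} (u v : Fin N → ℂ)
    (h : ∀ τ : ℤ, acf u τ + acf v τ = if τ = 0 then (2 * N : ℂ) else 0)
    (w : ℂ) (hw : w * (starRingEnd ℂ) w = 1) :
    (∑ n : Fin N, u n * w ^ (n : ℕ)) * (starRingEnd ℂ) (∑ n : Fin N, u n * w ^ (n : ℕ)) +
    (∑ n : Fin N, v n * w ^ (n : ℕ)) * (starRingEnd ℂ) (∑ n : Fin N, v n * w ^ (n : ℕ))
      = 2 * N := by
  have hw0 : w ≠ 0 := by
    intro h0; rw [h0, zero_mul] at hw; exact one_ne_zero hw.symm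
  have hconj : (starRingEnd ℂ) w = w⁻¹ := eq_inv_of_mul_eq_one_right hw
  have expand : ∀ φ : Fin N → ℂ,
      (∑ n : Fin N, φ n * w ^ (n : ℕ)) * (starRingEnd ℂ) (∑ n : Fin N, φ n * w ^ (n : ℕ))
        = ∑ m : Fin N, ∑ k : Fin N, (φ m * (starRingEnd ℂ) (φ k)) * w ^ (((m:ℕ):ℤ) - ((k:ℕ):ℤ)) := by
    intro φ
    rw [map_sum, Finset.sum_mul_sum]
    refine Finset.sum_congr rfl fun m _ => Finset.sum_congr rfl fun k _ => ?_
    rw [map_mul, map_pow, hconj, zpow_sub₀ hw0, zpow_natCast, zpow_natCast, inv_pow]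
    ring
  rw [expand, expand, ← Finset.sum_add_distrib]
  simp only [← Finset.sum_add_distrib]
  have step : ∀ m k : Fin N,
      (u m * (starRingEnd ℂ) (u k)) * w ^ (((m:ℕ):ℤ) - ((k:ℕ):ℤ)) +
      (v m * (starRingEnd ℂ) (v k)) * w ^ (((m:ℕ):ℤ) - ((k:ℕ):ℤ))
        = ∑ τ ∈ Finset.Icc (-(N:ℤ)) N,
            (if ((k:ℕ):ℤ) - ((m:ℕ):ℤ) = τ then
              (u m * (starRingEnd ℂ) (u k) + v m * (starRingEnd ℂ) (v k)) * w ^ (-τ) else 0) := by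
    intro m k
    rw [Finset.sum_ite_eq]
    have hin : ((k:ℕ):ℤ) - ((m:ℕ):ℤ) ∈ Finset.Icc (-(N:ℤ)) N := by
      rw [Finset.mem_Icc]
      have := m.isLt; have := k.isLt
      omega
    rw [if_pos hin, neg_sub]
    ring
  simp only [step]
  have swap1 : ∀ m : Fin N, (∑ k : Fin N, ∑ τ ∈ Finset.Icc (-(N:ℤ)) N,
      (if ((k:ℕ):ℤ) - ((m:ℕ):ℤ) = τ then
        (u m * (starRingEnd ℂ) (u k) + v m * (starRingEnd ℂ) (v k)) * w ^ (-τ) else 0))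
      = ∑ τ ∈ Finset.Icc (-(N:ℤ)) N, ∑ k : Fin N,
      (if ((k:ℕ):ℤ) - ((m:ℕ):ℤ) = τ then
        (u m * (starRingEnd ℂ) (u k) + v m * (starRingEnd ℂ) (v k)) * w ^ (-τ) else 0) :=
    fun m => Finset.sum_comm
  simp only [swap1]
  rw [Finset.sum_comm]
  have inner : ∀ τ ∈ Finset.Icc (-(N:ℤ)) N, (∑ m : Fin N, ∑ k : Fin N,
      (if ((k:ℕ):ℤ) - ((m:ℕ):ℤ) = τ then
        (u m * (starRingEnd ℂ) (u k) + v m * (starRingEnd ℂ) (v k)) * w ^ (-τ) else 0))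
      = (if τ = 0 then (2 * N : ℂ) else 0) * w ^ (-τ) := by
    intro τ _
    rw [← h τ, acf, acf, add_mul, Finset.sum_mul, Finset.sum_mul, ← Finset.sum_add_distrib]
    refine Finset.sum_congr rfl fun m _ => ?_
    rw [Finset.sum_mul, Finset.sum_mul, ← Finset.sum_add_distrib]
    refine Finset.sum_congr rfl fun k _ => ?_
    by_cases hc : ((k:ℕ):ℤ) - ((m:ℕ):ℤ) = τ
    · simp only [if_pos hc]; ring
    · simp only [if_neg hc]; ring
  rw [Finset.sum_congr rfl inner]
  simp only [ite_mul, zero_mul]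
  rw [Finset.sum_ite_eq' (Finset.Icc (-(N:ℤ)) N) 0 (fun τ => (2 * N : ℂ) * w ^ (-τ))]
  have h0 : (0:ℤ) ∈ Finset.Icc (-(N:ℤ)) N := by
    rw [Finset.mem_Icc]; omega
  rw [if_pos h0]
  simp

theorem golay_expansion {M N : ℕ} (φH φV : Fin M → ℂ)
    (hH : ∀ m, ‖φH m‖ = 1) (hV : ∀ m, ‖φV m‖ = 1)
    (u v : Fin N → ℂ) (huv : IsGolayPair u v) (ψ : ℝ) :
    (‖∑ i : Fin (N * M + N * M),
        Fin.append (kron u φH) (kron (fun n => -(v n)) (fun m => (starRingEnd ℂ) (φV m.rev))) i *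
          steer (N * M + N * M) ψ i‖) ^ 2 +
      (‖∑ i : Fin (N * M + N * M),
        Fin.append (kron u φV) (kron v (fun m => (starRingEnd ℂ) (φH m.rev))) i *
          steer (N * M + N * M) ψ i‖) ^ 2
      = 2 * N *
        ((‖∑ m : Fin M, φH m * steer M ψ m‖) ^ 2 +
          (‖∑ m : Fin M, φV m * steer M ψ m‖) ^ 2) := by
  obtain ⟨hu1, hv1, hg⟩ := huv
  obtain ⟨z, hzdef⟩ : ∃ z : ℂ, z = Complex.exp (-Complex.I * ψ) := ⟨_, rfl⟩
  have habsz : ‖z‖ = 1 := by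
    rw [hzdef, Complex.norm_exp]
    simp
  have hz1 : z * (starRingEnd ℂ) z = 1 := by
    rw [Complex.mul_conj, Complex.normSq_eq_norm_sq, habsz]
    norm_num
  simp only [steer_eq, ← hzdef]
  rw [Fin.sum_univ_add, Fin.sum_univ_add]
  simp only [Fin.append_left, Fin.append_right, Fin.coe_castAdd, Fin.coe_natAdd]
  have factor : ∀ f : Fin (N*M) → ℂ,
      ∑ i : Fin (N*M), f i * (z ^ (N*M) * z ^ (i:ℕ))
        = z ^ (N*M) * ∑ i : Fin (N*M), f i * z ^ (i:ℕ) := by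
    intro f
    rw [Finset.mul_sum]
    exact Finset.sum_congr rfl fun i _ => by ring
  simp only [pow_add, factor, kron_sum]
  rw [rev_sum φV z hz1, rev_sum φH z hz1]
  simp only [neg_mul, Finset.sum_neg_distrib]
  set U : ℂ := ∑ n : Fin N, u n * (z ^ M) ^ (n : ℕ) with hU
  set V : ℂ := ∑ n : Fin N, v n * (z ^ M) ^ (n : ℕ) with hVs
  set PH : ℂ := ∑ m : Fin M, φH m * z ^ (m : ℕ) with hPH
  set PV : ℂ := ∑ m : Fin M, φV m * z ^ (m : ℕ) with hPV
  have hwM : z ^ M * (starRingEnd ℂ) (z ^ M) = 1 := by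
    rw [map_pow, ← mul_pow, hz1, one_pow]
  have hUV : U * (starRingEnd ℂ) U + V * (starRingEnd ℂ) V = 2 * N :=
    golay_spec u v hg (z ^ M) hwM
  have hc : (z ^ (N*M) * z ^ (M-1)) * ((starRingEnd ℂ) z ^ (N*M) * (starRingEnd ℂ) z ^ (M-1))
      = 1 := by
    rw [mul_mul_mul_comm, ← mul_pow, ← mul_pow, hz1, one_pow, one_pow, one_mul]
  have habs : ∀ x : ℂ, ((‖x‖ : ℝ) : ℂ) ^ 2 = x * (starRingEnd ℂ) x := by
    intro x
    rw [← Complex.ofReal_pow, ← Complex.normSq_eq_norm_sq, Complex.mul_conj]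
  clear_value U V PH PV
  rw [← Complex.ofReal_inj]
  push_cast
  rw [habs, habs, habs, habs]
  simp only [map_add, map_mul, map_neg, map_pow, Complex.conj_conj]
  linear_combination (V * (starRingEnd ℂ) V * (PH * (starRingEnd ℂ) PH + PV * (starRingEnd ℂ) PV)) * hc
    + (PH * (starRingEnd ℂ) PH + PV * (starRingEnd ℂ) PV) * hUV
end

section
/- Golay complementary pairs cannot have odd length greater than 1 over the alphabet {+1, -1}: if u, v ∈ {±1}^M form a Golay pair, then R_u[M-1] + R_v[M-1] = u_1 u_M + v_1 v_M = 0 forces u_1 u_M = -v_1 v_M, and summing R_u[τ]+R_v[τ] over all τ shows (∑_m u_m)² + (∑_m v_m)² = 2M, so 2M is a sum of two squares of integers of the same parity as M; in particular M is even or M = 1. -/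
open Complex BigOperators Finset

private lemma prod_pm1 {α : Type*} (s : Finset α) (x : α → ℤ)
    (h : ∀ m ∈ s, x m = 1 ∨ x m = -1) :
    (∏ m ∈ s, x m) = 1 ∨ (∏ m ∈ s, x m) = -1 := by
  classical
  induction s using Finset.cons_induction with
  | empty => left; simp
  | cons a s ha ih =>
    rcases h a (Finset.mem_cons_self a s) with h1 | h1 <;>
    rcases ih (fun m hm => h m (Finset.mem_cons_of_mem hm)) with h2 | h2 <;>
    norm_num [Finset.prod_cons, Finset.prod_insert, ha, h1, h2]

private lemma sum_prod_mod4 {α : Type*} (s : Finset α) (x : α → ℤ)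
    (h : ∀ m ∈ s, x m = 1 ∨ x m = -1) :
    (4:ℤ) ∣ (∑ m ∈ s, x m) + 1 - (∏ m ∈ s, x m) - s.card := by
  classical
  induction s using Finset.cons_induction with
  | empty => simp
  | cons a s ha ih =>
    have hp := prod_pm1 s x (fun m hm => h m (Finset.mem_cons_of_mem hm))
    have ih' := ih (fun m hm => h m (Finset.mem_cons_of_mem hm))
    rw [Finset.sum_cons, Finset.prod_cons, Finset.card_cons]
    rcases h a (Finset.mem_cons_self a s) with h1 | h1 <;>
      rcases hp with h2 | h2 <;>
      rw [h1, h2] <;> rw [h2] at ih' <;> push_cast at ih' ⊢ <;> omega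

private lemma telescope (x : ℕ → ℤ) (hx : ∀ n, x n = 1 ∨ x n = -1) :
    ∀ n, ∏ m ∈ Finset.range n, (x m * x (m+1)) = x 0 * x n := by
  intro n
  induction n with
  | zero => rcases hx 0 with h | h <;> simp [h]
  | succ n ih =>
    have hs : x n * x n = 1 := by rcases hx n with h | h <;> simp [h]
    rw [Finset.prod_range_succ, ih]
    linear_combination (x 0 * x (n+1)) * hs

private lemma I_eq (M : ℕ) (U : ℕ → ℤ) (d : ℕ) :
    (∑ m ∈ Finset.range M, ∑ k ∈ Finset.range M,
      if ((k:ℤ) - (m:ℤ) = (d:ℤ)) then U m * U k else 0)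
    = ∑ m ∈ Finset.range (M - d), U m * U (m + d) := by
  have h1 : ∀ m ∈ Finset.range M,
      (∑ k ∈ Finset.range M, if ((k:ℤ) - (m:ℤ) = (d:ℤ)) then U m * U k else 0)
      = if m + d ∈ Finset.range M then U m * U (m + d) else 0 := by
    intro m _
    rw [← Finset.sum_ite_eq' (Finset.range M) (m + d) (fun k => U m * U k)]
    apply Finset.sum_congr rfl
    intro k _
    refine if_congr ?_ rfl rfl
    omega
  rw [Finset.sum_congr rfl h1]
  rw [← Finset.sum_filter]
  apply Finset.sum_congr _ (fun _ _ => rfl)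
  ext m
  simp only [Finset.mem_filter, Finset.mem_range]
  omega

private lemma acf_cast {M : ℕ} (u : Fin M → ℂ) (U : ℕ → ℤ)
    (hU : ∀ m : Fin M, ((U (m : ℕ) : ℤ) : ℂ) = u m)
    (hreal : ∀ m, (starRingEnd ℂ) (u m) = u m) (τ : ℤ) :
    acf u τ = ((∑ m ∈ Finset.range M, ∑ k ∈ Finset.range M,
      if ((k:ℤ) - (m:ℤ) = τ) then U m * U k else 0 : ℤ) : ℂ) := by
  unfold acf
  push_cast
  rw [← Fin.sum_univ_eq_sum_range (fun m => ∑ k ∈ Finset.range M,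
    (if ((k:ℤ) - (m:ℤ) = τ) then ((U m : ℂ) * (U k : ℂ)) else 0)) M]
  apply Finset.sum_congr rfl
  intro m _
  rw [← Fin.sum_univ_eq_sum_range (fun k => (if ((k:ℤ) - ((m:ℕ):ℤ) = τ) then ((U (m:ℕ) : ℂ) * (U k : ℂ)) else 0)) M]
  apply Finset.sum_congr rfl
  intro k _
  rw [hU m, hU k, hreal k]

private lemma sum_acf {M : ℕ} (w : Fin M → ℂ) (hreal : ∀ m, (starRingEnd ℂ) (w m) = w m) :
    ∑ τ ∈ Finset.Icc (-(M:ℤ)) (M:ℤ), acf w τ = (∑ m : Fin M, w m) ^ 2 := by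
  unfold acf
  rw [Finset.sum_comm]
  have step : ∀ m : Fin M,
      (∑ τ ∈ Finset.Icc (-(M:ℤ)) (M:ℤ), ∑ k : Fin M,
        if ((k:ℤ) - (m:ℤ) = τ) then w m * (starRingEnd ℂ) (w k) else 0)
      = ∑ k : Fin M, w m * w k := by
    intro m
    rw [Finset.sum_comm]
    apply Finset.sum_congr rfl
    intro k _
    rw [Finset.sum_ite_eq (Finset.Icc (-(M:ℤ)) (M:ℤ)) ((k:ℤ) - (m:ℤ))
      (fun _ => w m * (starRingEnd ℂ) (w k)), if_pos, hreal k]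
    have := k.isLt; have := m.isLt
    simp only [Finset.mem_Icc]; omega
  rw [Finset.sum_congr rfl (fun m _ => step m)]
  rw [← Finset.sum_mul_sum]
  ring

theorem binary_golay_sum_of_squares {M : ℕ} (u v : Fin M → ℂ)
    (hu : ∀ m, u m = 1 ∨ u m = -1) (hv : ∀ m, v m = 1 ∨ v m = -1)
    (h : ∀ τ : ℤ, acf u τ + acf v τ = if τ = 0 then (2 * M : ℂ) else 0) :
    (∑ m : Fin M, u m) ^ 2 + (∑ m : Fin M, v m) ^ 2 = (2 * M : ℂ) ∧ (M = 1 ∨ Even M) := by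
  have hur : ∀ m, (starRingEnd ℂ) (u m) = u m := by
    intro m; rcases hu m with h1 | h1 <;> simp [h1]
  have hvr : ∀ m, (starRingEnd ℂ) (v m) = v m := by
    intro m; rcases hv m with h1 | h1 <;> simp [h1]
  constructor
  · have HA : ∑ τ ∈ Finset.Icc (-(M:ℤ)) (M:ℤ), (acf u τ + acf v τ)
        = ∑ τ ∈ Finset.Icc (-(M:ℤ)) (M:ℤ), (if τ = 0 then (2 * M : ℂ) else 0) :=
      Finset.sum_congr rfl (fun τ _ => h τ)
    rw [Finset.sum_add_distrib, sum_acf u hur, sum_acf v hvr,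
      Finset.sum_ite_eq' (Finset.Icc (-(M:ℤ)) (M:ℤ)) 0 (fun _ => (2 * M : ℂ)),
      if_pos (by simp : (0:ℤ) ∈ Finset.Icc (-(M:ℤ)) (M:ℤ))] at HA
    exact HA
  · rcases Nat.lt_or_ge M 2 with hM2 | hM2
    · interval_cases M
      · right; exact Even.zero
      · left; rfl
    · right
      -- integer sequences
      set U : ℕ → ℤ := fun n => if hn : n < M then (if u ⟨n, hn⟩ = 1 then 1 else -1) else 1 with hUdef
      set V : ℕ → ℤ := fun n => if hn : n < M then (if v ⟨n, hn⟩ = 1 then 1 else -1) else 1 with hVdef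
      have hU1 : ∀ n, U n = 1 ∨ U n = -1 := by
        intro n; simp only [hUdef]; split_ifs <;> simp
      have hV1 : ∀ n, V n = 1 ∨ V n = -1 := by
        intro n; simp only [hVdef]; split_ifs <;> simp
      have hUc : ∀ m : Fin M, ((U (m : ℕ) : ℤ) : ℂ) = u m := by
        intro m
        simp only [hUdef, m.isLt, dif_pos, Fin.eta]
        rcases hu m with h1 | h1 <;> simp [h1]
        exact fun h2 => absurd h2 (by norm_num)
      have hVc : ∀ m : Fin M, ((V (m : ℕ) : ℤ) : ℂ) = v m := by
        intro m
        simp only [hVdef, m.isLt, dif_pos, Fin.eta]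
        rcases hv m with h1 | h1 <;> simp [h1]
        exact fun h2 => absurd h2 (by norm_num)
      -- equation at lag 1
      have E1 : (∑ m ∈ Finset.range (M - 1), U m * U (m + 1))
          + (∑ m ∈ Finset.range (M - 1), V m * V (m + 1)) = 0 := by
        have h1 := h 1
        rw [if_neg one_ne_zero, acf_cast u U hUc hur 1, acf_cast v V hVc hvr 1] at h1
        have h1' : (∑ m ∈ Finset.range M, ∑ k ∈ Finset.range M,
              if ((k:ℤ) - (m:ℤ) = ((1:ℕ):ℤ)) then U m * U k else 0)
            + (∑ m ∈ Finset.range M, ∑ k ∈ Finset.range M,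
              if ((k:ℤ) - (m:ℤ) = ((1:ℕ):ℤ)) then V m * V k else 0) = 0 := by
          exact_mod_cast h1
        rwa [I_eq M U 1, I_eq M V 1] at h1'
      -- equation at lag M-1
      have E2 : U 0 * U (M - 1) + V 0 * V (M - 1) = 0 := by
        have hMne : ((M:ℤ) - 1) ≠ 0 := by omega
        have h1 := h ((M:ℤ) - 1)
        rw [if_neg hMne, acf_cast u U hUc hur _, acf_cast v V hVc hvr _] at h1
        have hcast : ((M - 1 : ℕ) : ℤ) = (M:ℤ) - 1 := by omega
        rw [← hcast] at h1
        have h1' : (∑ m ∈ Finset.range M, ∑ k ∈ Finset.range M,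
              if ((k:ℤ) - (m:ℤ) = ((M - 1:ℕ):ℤ)) then U m * U k else 0)
            + (∑ m ∈ Finset.range M, ∑ k ∈ Finset.range M,
              if ((k:ℤ) - (m:ℤ) = ((M - 1:ℕ):ℤ)) then V m * V k else 0) = 0 := by
          exact_mod_cast h1
        rw [I_eq M U (M-1), I_eq M V (M-1)] at h1'
        have hr1 : M - (M - 1) = 1 := by omega
        rw [hr1] at h1'
        simpa using h1'
      -- the product argument
      set n := M - 1 with hn
      set W : ℕ → ℤ := fun m => (U m * U (m + 1)) * (V m * V (m + 1)) with hWdef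
      have hW1 : ∀ m, W m = 1 ∨ W m = -1 := by
        intro m
        rcases hU1 m with a | a <;> rcases hU1 (m+1) with b | b <;>
          rcases hV1 m with c | c <;> rcases hV1 (m+1) with d | d <;>
          simp [hWdef, a, b, c, d]
      have P1 : ∏ m ∈ Finset.range n, W m = -1 := by
        have : ∏ m ∈ Finset.range n, W m
            = (∏ m ∈ Finset.range n, (U m * U (m+1))) * (∏ m ∈ Finset.range n, (V m * V (m+1))) := by
          rw [← Finset.prod_mul_distrib]
        rw [this, telescope U hU1 n, telescope V hV1 n]
        have hVn : V 0 * V n = -(U 0 * U n) := by rw [hn]; linarith [E2]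
        rw [hVn]
        have : (U 0 * U n) * (U 0 * U n) = 1 := by
          rcases hU1 0 with a | a <;> rcases hU1 n with b | b <;> simp [a, b]
        linear_combination -this
      have P2 : (8:ℤ) ∣ ∑ m ∈ Finset.range n, (U m * U (m+1) + V m * V (m+1))^2 := by
        have hsum : ∑ m ∈ Finset.range n, (U m * U (m+1) + V m * V (m+1)) = 0 := by
          rw [Finset.sum_add_distrib]; exact E1
        have hterm : ∀ m ∈ Finset.range n,
            (8:ℤ) ∣ ((U m * U (m+1) + V m * V (m+1))^2 - 2 * (U m * U (m+1) + V m * V (m+1))) := by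
          intro m _
          rcases hU1 m with a | a <;> rcases hU1 (m+1) with b | b <;>
            rcases hV1 m with c | c <;> rcases hV1 (m+1) with d | d <;>
            simp [a, b, c, d]
        have := Finset.dvd_sum hterm
        rw [Finset.sum_sub_distrib, ← Finset.mul_sum, hsum, mul_zero, sub_zero] at this
        exact this
      have P3 : ∑ m ∈ Finset.range n, (U m * U (m+1) + V m * V (m+1))^2
          = 2 * n + 2 * ∑ m ∈ Finset.range n, W m := by
        rw [Finset.mul_sum]
        have : ∀ m ∈ Finset.range n,
            (U m * U (m+1) + V m * V (m+1))^2 = 2 * W m + 2 := by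
          intro m _
          rcases hU1 m with a | a <;> rcases hU1 (m+1) with b | b <;>
            rcases hV1 m with c | c <;> rcases hV1 (m+1) with d | d <;>
            simp [hWdef, a, b, c, d] <;> ring
        rw [Finset.sum_congr rfl this, Finset.sum_add_distrib]
        simp [mul_comm]
        ring
      have P4 := sum_prod_mod4 (Finset.range n) W (fun m _ => hW1 m)
      rw [P1, Finset.card_range] at P4
      rw [P3] at P2
      set S := ∑ m ∈ Finset.range n, W m
      have hnM : n = M - 1 := hn
      rw [Nat.even_iff]
      -- from P2 : 8 ∣ 2n + 2S ; P4 : 4 ∣ S + 1 + 1 - n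
      have hni : (n:ℤ) = (M:ℤ) - 1 := by omega
      omega
end
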